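/- arXiv:2001.10315 — 2 statements merged into one kernel-verified Lean document; each statement's English description precedes it below -/
import Mathlib

section
/- For m ≥ 2, any prime p, and any integer k ≥ 2, the number p^k is an m-Carmichael number, i.e., A^(K_m(p^k)) = I for all A ∈ GL(m, ℤ/p^kℤ). -/
open Finset Matrix

noncomputable def Dm (m n : ℕ) : ℕ :=
  (∏ j ∈ Finset.Icc 1 m, (Polynomial.cyclotomic j ℤ).eval (n : ℤ)).toNat

def nablam (m n : ℕ) : ℕ := ∏ p ∈ n.primeFactors, p ^ (Nat.clog p m - 1)

noncomputable def Km (m n : ℕ) : ℕ := n * nablam m n * Dm m n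

def IsMCarmichael (m n : ℕ) : Prop :=
  ¬ n.Prime ∧ 2 ≤ n ∧ ∀ A : GL (Fin m) (ZMod n), A ^ Km m n = 1

/-! Reduce modulo `p`. Over `𝔽_p` every irreducible factor of the characteristic polynomial of
an invertible matrix has some degree `j ≤ m` and its roots are units of `𝔽_{p^j}`, so it divides
`X ^ D - 1` for `D = D_m(p^k)`, because `p^j - 1 ∣ p^(kj) - 1 ∣ D`. Hence
`χ_A ∣ (X^D - 1)^m ∣ (X^D - 1)^(p^c) = X^(D p^c) - 1` with `c = ⌈log_p m⌉`, i.e.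
`A^(D p^c) ≡ 1 mod p`. Over `ℤ/p^k` one has `(1 + p N)^(p^(k-1)) = 1`, and `D p^c p^(k-1)` divides
`K_m(p^k) = p^k p^(c-1) D`. -/

open Polynomial

theorem Polynomial.dvd_pow_natDegree_of_forall_irreducible_dvd {F : Type*} [Field F]
    {f g : F[X]} (hf : f ≠ 0) (h : ∀ q : F[X], Irreducible q → q ∣ f → q ∣ g) :
    f ∣ g ^ f.natDegree := by
  induction f using WfDvdMonoid.induction_on_irreducible with
  | zero => exact absurd rfl hf
  | unit u hu => exact hu.dvd
  | mul a q ha hq ih =>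
    have hdeg : a.natDegree + 1 ≤ (q * a).natDegree := by
      rw [natDegree_mul hq.ne_zero ha]
      have := hq.natDegree_pos
      omega
    calc q * a ∣ g * g ^ a.natDegree :=
          mul_dvd_mul (h q hq (dvd_mul_right q a))
            (ih ha fun r hr hra => h r hr (hra.mul_left q))
      _ = g ^ (a.natDegree + 1) := (pow_succ' g _).symm
      _ ∣ g ^ (q * a).natDegree := pow_dvd_pow g hdeg

theorem Irreducible.dvd_X_pow_card_pow_sub_one {K : Type*} [Field K] [Finite K] {f : K[X]}
    (hf : Irreducible f) (hX : ¬ f ∣ X) :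
    f ∣ X ^ (Nat.card K ^ f.natDegree - 1) - 1 := by
  have hpos : 0 < Nat.card K ^ f.natDegree := Nat.pow_pos Nat.card_pos
  have hroot : f ∣ X * (X ^ (Nat.card K ^ f.natDegree - 1) - 1) := by
    rw [mul_sub, mul_one, ← pow_succ', Nat.sub_add_cancel hpos]
    exact hf.natDegree_dvd_iff_dvd_X_pow_card_pow_sub_X.mp dvd_rfl
  exact (hf.prime.dvd_or_dvd hroot).resolve_left hX

theorem Matrix.not_X_dvd_charpoly_of_isUnit_det {K : Type*} [Field K] {ι : Type*} [Fintype ι]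
    [DecidableEq ι] {M : Matrix ι ι K} (hM : IsUnit M.det) : ¬ X ∣ M.charpoly := by
  rw [X_dvd_iff]
  intro h
  rw [Matrix.det_eq_sign_charpoly_coeff, h, mul_zero] at hM
  exact not_isUnit_zero hM

theorem Matrix.pow_mul_pow_clog_eq_one {K : Type*} [Field K] [Finite K] {p : ℕ} [Fact p.Prime]
    [CharP K p] {ι : Type*} [Fintype ι] [DecidableEq ι] {M : Matrix ι ι K} (hM : IsUnit M.det)
    {D : ℕ} (hD : ∀ j ∈ Icc 1 (Fintype.card ι), Nat.card K ^ j - 1 ∣ D) :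
    M ^ (D * p ^ Nat.clog p (Fintype.card ι)) = 1 := by
  have hfactor : ∀ q : K[X], Irreducible q → q ∣ M.charpoly → q ∣ X ^ D - 1 := by
    intro q hq hqM
    have hj : q.natDegree ∈ Icc 1 (Fintype.card ι) :=
      mem_Icc.mpr ⟨hq.natDegree_pos,
        M.charpoly_natDegree_eq_dim ▸ natDegree_le_of_dvd hqM M.charpoly_monic.ne_zero⟩
    have hqX : ¬ q ∣ X := fun h =>
      Matrix.not_X_dvd_charpoly_of_isUnit_det hM
        ((hq.associated_of_dvd irreducible_X h).symm.dvd.trans hqM)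
    obtain ⟨t, ht⟩ := hD _ hj
    calc q ∣ X ^ (Nat.card K ^ q.natDegree - 1) - 1 := hq.dvd_X_pow_card_pow_sub_one hqX
      _ ∣ (X ^ (Nat.card K ^ q.natDegree - 1)) ^ t - 1 ^ t := sub_dvd_pow_sub_pow _ _ _
      _ = X ^ D - 1 := by rw [one_pow, ← pow_mul, ← ht]
  have hcharpoly : M.charpoly ∣ X ^ (D * p ^ Nat.clog p (Fintype.card ι)) - 1 :=
    calc M.charpoly ∣ (X ^ D - 1) ^ M.charpoly.natDegree :=
          dvd_pow_natDegree_of_forall_irreducible_dvd M.charpoly_monic.ne_zero hfactor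
      _ ∣ (X ^ D - 1) ^ p ^ Nat.clog p (Fintype.card ι) :=
          pow_dvd_pow _ (M.charpoly_natDegree_eq_dim ▸ Nat.le_pow_clog (Fact.out : p.Prime).one_lt _)
      _ = X ^ (D * p ^ Nat.clog p (Fintype.card ι)) - 1 := by
          rw [sub_pow_char_pow, one_pow, pow_mul]
  obtain ⟨r, hr⟩ := hcharpoly
  have := congrArg (aeval M) hr
  rwa [map_mul, Matrix.aeval_self_charpoly, zero_mul, map_sub, map_pow, aeval_X, map_one,
    sub_eq_zero] at this

theorem ZMod.exists_eq_natCast_mul_of_castHom_eq_zero {n d : ℕ} (h : d ∣ n) {x : ZMod n}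
    (hx : ZMod.castHom h (ZMod d) x = 0) : ∃ y : ZMod n, x = d * y := by
  obtain ⟨a, rfl⟩ := ZMod.intCast_surjective x
  rw [map_intCast, ZMod.intCast_zmod_eq_zero_iff_dvd] at hx
  obtain ⟨b, rfl⟩ := hx
  exact ⟨b, by push_cast; rfl⟩

theorem Matrix.exists_eq_one_add_natCast_mul_of_map_castHom_eq_one {ι : Type*} [Fintype ι]
    [DecidableEq ι] {n d : ℕ} (h : d ∣ n) {M : Matrix ι ι (ZMod n)}
    (hM : M.map (ZMod.castHom h (ZMod d)) = 1) :
    ∃ N : Matrix ι ι (ZMod n), M = 1 + (d : Matrix ι ι (ZMod n)) * N := by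
  have hsub : (M - 1).map (ZMod.castHom h (ZMod d)) = 0 := by
    rw [← RingHom.mapMatrix_apply, map_sub, map_one, RingHom.mapMatrix_apply, hM, sub_self]
  have hentry : ∀ i j, ∃ y : ZMod n, (M - 1) i j = d * y := fun i j =>
    ZMod.exists_eq_natCast_mul_of_castHom_eq_zero h (congrFun (congrFun hsub i) j)
  choose N hN using hentry
  refine ⟨Matrix.of N, ?_⟩
  rw [← sub_eq_iff_eq_add', ← nsmul_eq_mul]
  ext i j
  rw [hN, Matrix.smul_apply, Matrix.of_apply, nsmul_eq_mul]

theorem one_add_natCast_mul_pow_eq_one {R : Type*} [Ring R] {p k : ℕ} (hp : (p : R) ^ (k + 1) = 0)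
    (N : R) : (1 + p * N) ^ p ^ k = 1 := by
  -- `R` need not be commutative, so the congruence is proved in `ℤ[X]` and evaluated at `N`.
  obtain ⟨q, hq⟩ := dvd_sub_pow_of_dvd_sub (R := ℤ[X]) (a := 1 + (p : ℤ[X]) * X) (b := 1)
    (by rw [add_sub_cancel_left]; exact dvd_mul_right _ _) k
  have := congrArg (aeval N) hq
  simp only [map_sub, map_pow, map_add, map_one, map_mul, map_natCast, aeval_X, one_pow] at this
  rwa [hp, zero_mul, sub_eq_zero] at this

theorem pow_sub_one_dvd_Dm {m n j : ℕ} (hn : 1 < n) (hj : j ∈ Icc 1 m) :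
    n ^ j - 1 ∣ Dm m n := by
  obtain ⟨hj1, hjm⟩ := mem_Icc.mp hj
  have hprod : 0 ≤ ∏ i ∈ Icc 1 m, (cyclotomic i ℤ).eval (n : ℤ) :=
    (prod_pos fun i _ => cyclotomic_pos' i (by exact_mod_cast hn)).le
  have hdivisors : j.divisors ⊆ Icc 1 m := fun i hi => by
    obtain ⟨hij, -⟩ := Nat.mem_divisors.mp hi
    exact mem_Icc.mpr ⟨Nat.pos_of_dvd_of_pos hij hj1, (Nat.le_of_dvd hj1 hij).trans hjm⟩
  have hZ : (n : ℤ) ^ j - 1 ∣ ∏ i ∈ Icc 1 m, (cyclotomic i ℤ).eval (n : ℤ) := by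
    have := congrArg (eval (n : ℤ)) (prod_cyclotomic_eq_X_pow_sub_one hj1 ℤ)
    rw [eval_prod] at this
    simp only [eval_sub, eval_pow, eval_X, eval_one] at this
    exact this ▸ prod_dvd_prod_of_subset _ _ _ hdivisors
  rw [← Int.natCast_dvd_natCast, Dm, Int.toNat_of_nonneg hprod,
    Nat.cast_sub (Nat.one_le_pow _ _ (by omega))]
  push_cast
  exact hZ

theorem nablam_prime_pow {m p k : ℕ} (hp : p.Prime) (hk : k ≠ 0) :
    nablam m (p ^ k) = p ^ (Nat.clog p m - 1) := by
  rw [nablam, Nat.primeFactors_pow p hk, hp.primeFactors, prod_singleton]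

theorem Dm_mul_pow_clog_mul_pow_dvd_Km {m p k : ℕ} (hp : p.Prime) (hk : k ≠ 0) :
    Dm m (p ^ k) * p ^ Nat.clog p m * p ^ (k - 1) ∣ Km m (p ^ k) := by
  rw [Km, nablam_prime_pow hp hk, mul_assoc, mul_comm (Dm m _), ← pow_add, ← pow_add]
  exact mul_dvd_mul_right (pow_dvd_pow p (by omega)) _

theorem stmt7_general (m : ℕ) (p : ℕ) (hp : p.Prime) (k : ℕ) (hk : 2 ≤ k) :
    IsMCarmichael m (p ^ k) := by
  have : Fact p.Prime := ⟨hp⟩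
  refine ⟨Nat.Prime.not_prime_pow hk, hp.two_le.trans (Nat.le_self_pow (by omega) p), fun A => ?_⟩
  set φ := ZMod.castHom (dvd_pow_self p (by omega : k ≠ 0)) (ZMod p)
  set e := Dm m (p ^ k) * p ^ Nat.clog p m
  have hdet : IsUnit ((A : Matrix (Fin m) (Fin m) (ZMod (p ^ k))).map φ).det := by
    simpa only [RingHom.map_det, RingHom.mapMatrix_apply] using
      ((Matrix.isUnit_iff_isUnit_det _).mp A.isUnit).map φ
  have hD : ∀ j ∈ Icc 1 (Fintype.card (Fin m)), Nat.card (ZMod p) ^ j - 1 ∣ Dm m (p ^ k) := by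
    intro j hj
    rw [Fintype.card_fin] at hj
    rw [Nat.card_zmod]
    calc p ^ j - 1 ∣ (p ^ j) ^ k - 1 ^ k := Nat.sub_dvd_pow_sub_pow _ _ _
      _ = (p ^ k) ^ j - 1 := by rw [one_pow, pow_right_comm]
      _ ∣ Dm m (p ^ k) := pow_sub_one_dvd_Dm (Nat.one_lt_pow (by omega) hp.one_lt) hj
  have hred : ((A : Matrix (Fin m) (Fin m) (ZMod (p ^ k))) ^ e).map φ = 1 := by
    rw [Matrix.map_pow]
    simpa only [Fintype.card_fin] using Matrix.pow_mul_pow_clog_eq_one hdet hD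
  obtain ⟨N, hN⟩ := Matrix.exists_eq_one_add_natCast_mul_of_map_castHom_eq_one _ hred
  have hA : A ^ (e * p ^ (k - 1)) = 1 := by
    refine Units.ext ?_
    rw [Units.val_pow_eq_pow_val, pow_mul, hN, Units.val_one]
    refine one_add_natCast_mul_pow_eq_one ?_ N
    rw [← Nat.cast_pow, Nat.sub_add_cancel (by omega), ← Matrix.diagonal_natCast, ZMod.natCast_self,
      Matrix.diagonal_zero]
  obtain ⟨t, ht⟩ := Dm_mul_pow_clog_mul_pow_dvd_Km (m := m) hp (by omega : k ≠ 0)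
  rw [ht, pow_mul, hA, one_pow]

theorem stmt7 (m : ℕ) (hm : 2 ≤ m) (p : ℕ) (hp : p.Prime) (k : ℕ) (hk : 2 ≤ k) :
    IsMCarmichael m (p ^ k) :=
  stmt7_general m p hp k hk
end

section
/- Let m ≥ 2 and let n be a composite natural number. If there is a prime p dividing n such that D_m(p) does not divide K_m(n), then there exists A ∈ GL(m, ℤ/nℤ) with A^(K_m(n)) ≠ I; hence n is not m-Carmichael. -/
open Finset Matrix

/-!
If `Dm m p ∤ Km m n`, some prime power `q ^ a` divides `Dm m p = ∏_{j ≤ m} Φ_j(p)` but not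
`Km m n`. Every index `j` with `q ∣ Φ_j(p)` has the form `q ^ k * ord_q(p)`, so these indices all
divide the largest of them, `J ≤ m`, and `q ^ a ∣ ∏_{d ∣ J} Φ_d(p) = p ^ J - 1`. The cyclic group
`𝔽_{p^J}ˣ` therefore contains an element of order `q ^ a`; multiplication by it on the
`m`-dimensional `𝔽_p`-algebra `𝔽_{p^J} × 𝔽_p^(m - J)` is an element of `GL(m, 𝔽_p)` of order
`q ^ a`, and any lift of it to `GL(m, ℤ/nℤ)` has `Km m n`-th power different from `1`.
-/

open Polynomial

theorem ordProj_mul_orderOf_eq_of_dvd_cyclotomic_eval {q j : ℕ} (hq : q.Prime) (hj : j ≠ 0)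
    {x : ℤ} (h : (q : ℤ) ∣ (cyclotomic j ℤ).eval x) :
    q ^ j.factorization q * orderOf (x : ZMod q) = j := by
  have := Fact.mk hq
  have hroot : (cyclotomic j (ZMod q)).IsRoot (x : ZMod q) := by
    rw [IsRoot.def, ← map_cyclotomic_int, eval_intCast_map, Int.coe_castRingHom,
      ZMod.intCast_zmod_eq_zero_iff_dvd]
    exact h
  have : NeZero (Nat.cast (ordCompl[q] j) : ZMod q) :=
    ⟨fun h0 => Nat.not_dvd_ordCompl hq hj ((ZMod.natCast_eq_zero_iff _ _).1 h0)⟩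
  rw [← Nat.ordProj_mul_ordCompl_eq_self j q, isRoot_cyclotomic_prime_pow_mul_iff_of_charP]
    at hroot
  rw [← hroot.eq_orderOf, Nat.ordProj_mul_ordCompl_eq_self]

theorem exists_forall_dvd_of_dvd_cyclotomic_eval {q : ℕ} (hq : q.Prime) {x : ℤ}
    {S : Finset ℕ} (hS : S.Nonempty) (h0 : ∀ j ∈ S, j ≠ 0)
    (h : ∀ j ∈ S, (q : ℤ) ∣ (cyclotomic j ℤ).eval x) : ∃ J ∈ S, ∀ j ∈ S, j ∣ J := by
  obtain ⟨J, hJ, hmax⟩ := S.exists_max_image (fun j => j.factorization q) hS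
  refine ⟨J, hJ, fun j hj => ?_⟩
  rw [← ordProj_mul_orderOf_eq_of_dvd_cyclotomic_eval hq (h0 j hj) (h j hj),
    ← ordProj_mul_orderOf_eq_of_dvd_cyclotomic_eval hq (h0 J hJ) (h J hJ)]
  exact mul_dvd_mul_right (pow_dvd_pow q (hmax j hj)) _

theorem prod_cyclotomic_eval_dvd_pow_sub_one {R : Type*} [CommRing R] (x : R) {N : ℕ}
    (hN : N ≠ 0) {S : Finset ℕ} (hS : S ⊆ N.divisors) :
    ∏ j ∈ S, (cyclotomic j R).eval x ∣ x ^ N - 1 := by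
  have hprod := congrArg (eval x) (prod_cyclotomic_eq_X_pow_sub_one (Nat.pos_of_ne_zero hN) R)
  rw [eval_prod, eval_sub, eval_pow, eval_X, eval_one] at hprod
  exact hprod ▸ prod_dvd_prod_of_subset S _ _ hS

theorem exists_pow_dvd_pow_sub_one_of_dvd_prod_cyclotomic {q a m : ℕ} (hq : q.Prime)
    (ha : a ≠ 0) {x : ℤ} (h : (q : ℤ) ^ a ∣ ∏ j ∈ Icc 1 m, (cyclotomic j ℤ).eval x) :
    ∃ J ∈ Icc 1 m, (q : ℤ) ^ a ∣ x ^ J - 1 := by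
  classical
  have hqZ : Prime (q : ℤ) := Nat.prime_iff_prime_int.1 hq
  set S := {j ∈ Icc 1 m | (q : ℤ) ∣ (cyclotomic j ℤ).eval x}
  have hcoprime : IsCoprime ((q : ℤ) ^ a)
      (∏ j ∈ Icc 1 m with ¬ (q : ℤ) ∣ (cyclotomic j ℤ).eval x, (cyclotomic j ℤ).eval x) :=
    IsCoprime.prod_right fun j hj =>
      ((Prime.coprime_iff_not_dvd hqZ).2 (mem_filter.1 hj).2).pow_left
  have hS : (q : ℤ) ^ a ∣ ∏ j ∈ S, (cyclotomic j ℤ).eval x :=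
    hcoprime.dvd_of_dvd_mul_right (by rwa [prod_filter_mul_prod_filter_not])
  have hSne : S.Nonempty := by
    rw [nonempty_iff_ne_empty]
    rintro hempty
    rw [hempty, prod_empty] at hS
    exact hqZ.not_dvd_one ((dvd_pow_self _ ha).trans hS)
  have hS0 : ∀ j ∈ S, j ≠ 0 := fun j hj =>
    Nat.one_le_iff_ne_zero.1 (mem_Icc.1 (mem_filter.1 hj).1).1
  obtain ⟨J, hJ, hdvd⟩ := exists_forall_dvd_of_dvd_cyclotomic_eval hq hSne hS0
    fun j hj => (mem_filter.1 hj).2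
  refine ⟨J, (mem_filter.1 hJ).1, hS.trans (prod_cyclotomic_eval_dvd_pow_sub_one x (hS0 J hJ)
    fun j hj => Nat.mem_divisors.2 ⟨hdvd j hj, hS0 J hJ⟩)⟩

theorem natCast_Dm {p : ℕ} (hp : 0 < p) (m : ℕ) :
    (Dm m p : ℤ) = ∏ j ∈ Icc 1 m, (cyclotomic j ℤ).eval (p : ℤ) :=
  Int.toNat_of_nonneg <| prod_nonneg fun _ _ => cyclotomic_nonneg _ (by exact_mod_cast hp)

theorem exists_pow_dvd_pow_sub_one_of_dvd_Dm {p q a m : ℕ} (hp : 0 < p) (hq : q.Prime)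
    (ha : a ≠ 0) (h : q ^ a ∣ Dm m p) : ∃ j ∈ Icc 1 m, q ^ a ∣ p ^ j - 1 := by
  have hZ : (q : ℤ) ^ a ∣ ∏ j ∈ Icc 1 m, (cyclotomic j ℤ).eval (p : ℤ) := by
    rw [← natCast_Dm hp]
    exact_mod_cast h
  obtain ⟨j, hj, hdvd⟩ := exists_pow_dvd_pow_sub_one_of_dvd_prod_cyclotomic hq ha hZ
  refine ⟨j, hj, ?_⟩
  have : 1 ≤ p ^ j := Nat.one_le_pow _ _ hp
  zify [this]
  exact hdvd

theorem exists_units_hom_GL_injective_of_finrank_le (K L : Type*) [Field K] [Field L]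
    [Algebra K L] [FiniteDimensional K L] {m : ℕ} (h : Module.finrank K L ≤ m) :
    ∃ φ : Lˣ →* GL (Fin m) K, Function.Injective φ := by
  let V := L × (Fin (m - Module.finrank K L) → K)
  have hV : Module.finrank K V = m := by
    rw [Module.finrank_prod, Module.finrank_fin_fun]
    omega
  let b := Module.finBasisOfFinrankEq K V hV
  let ψ : L →* Matrix (Fin m) (Fin m) K :=
    (Algebra.leftMulMatrix b : V →* Matrix (Fin m) (Fin m) K).comp (MonoidHom.inl L _)
  have hψ : Function.Injective ψ :=
    (Algebra.leftMulMatrix_injective b).comp fun _ _ h => congrArg Prod.fst h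
  exact ⟨Units.map ψ, Units.map_injective hψ⟩

theorem exists_GL_orderOf_eq_of_dvd_pow_sub_one {p j m d : ℕ} (hp : p.Prime) (hj : j ∈ Icc 1 m)
    (hd : d ∣ p ^ j - 1) : ∃ A : GL (Fin m) (ZMod p), orderOf A = d := by
  have := Fact.mk hp
  have hj0 : j ≠ 0 := Nat.one_le_iff_ne_zero.1 (mem_Icc.1 hj).1
  obtain ⟨φ, hφ⟩ := exists_units_hom_GL_injective_of_finrank_le (ZMod p) (GaloisField p j)
    (GaloisField.finrank p hj0 ▸ (mem_Icc.1 hj).2)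
  obtain ⟨g, hg⟩ := IsCyclic.exists_ofOrder_eq_natCard (α := (GaloisField p j)ˣ)
  rw [Nat.card_units, GaloisField.card p j hj0] at hg
  have hg0 : orderOf g ≠ 0 := by
    have : 1 < p ^ j := Nat.one_lt_pow hj0 hp.one_lt
    omega
  refine ⟨φ (g ^ (orderOf g / d)), ?_⟩
  rw [orderOf_injective φ hφ, orderOf_pow_orderOf_div hg0 (hg ▸ hd)]

theorem ZMod.isUnit_of_forall_prime_dvd {n : ℕ} [NeZero n] {x : ZMod n}
    (h : ∀ ℓ (hℓ : ℓ ∣ n), ℓ.Prime → ZMod.castHom hℓ (ZMod ℓ) x ≠ 0) : IsUnit x := by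
  rw [← ZMod.natCast_zmod_val x, ZMod.isUnit_iff_coprime]
  refine Nat.coprime_of_dvd fun ℓ hℓ hx hn => h ℓ hn hℓ ?_
  rw [← ZMod.natCast_zmod_val x, map_natCast, ZMod.natCast_eq_zero_iff]
  exact hx

theorem RingHom.mapMatrix_smul_add_sub_smul_one {ι R S : Type*} [Fintype ι] [DecidableEq ι]
    [CommRing R] [CommRing S] (f : R →+* S) (e : R) (L : Matrix ι ι R) :
    f.mapMatrix (e • L + (1 - e) • 1) = f e • L.map f + (1 - f e) • 1 := by
  ext i k
  by_cases hik : i = k <;>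
    simp only [RingHom.mapMatrix_apply, map_apply, Matrix.add_apply, Matrix.smul_apply,
      smul_eq_mul, one_apply, hik, if_true, if_false, map_add, map_mul, map_sub, map_one, map_zero]

theorem Matrix.GeneralLinearGroup.map_castHom_surjective {ι : Type*} [Fintype ι] [DecidableEq ι]
    {n p : ℕ} [NeZero n] (hp : p.Prime) (hpn : p ∣ n) :
    Function.Surjective (GeneralLinearGroup.map (n := ι) (ZMod.castHom hpn (ZMod p))) := by
  have := Fact.mk hp
  intro A₀
  -- `e` is `1` modulo `p` (Fermat) and `0` modulo every other prime factor of `n`, so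
  -- `M = e • L + (1 - e) • 1` reduces to `A₀` modulo `p` and to `1` modulo the other primes.
  let e : ZMod n := (ordCompl[p] n : ZMod n) ^ (p - 1)
  let L : Matrix ι ι (ZMod n) := (A₀ : Matrix ι ι (ZMod p)).map fun x => (x.val : ZMod n)
  let M : Matrix ι ι (ZMod n) := e • L + (1 - e) • 1
  have hmap : ∀ ℓ (hℓ : ℓ ∣ n), (ZMod.castHom hℓ (ZMod ℓ)).mapMatrix M =
      ZMod.castHom hℓ (ZMod ℓ) e • L.map (ZMod.castHom hℓ (ZMod ℓ)) +
        (1 - ZMod.castHom hℓ (ZMod ℓ) e) • 1 :=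
    fun ℓ hℓ => RingHom.mapMatrix_smul_add_sub_smul_one _ e L
  have hLp : L.map (ZMod.castHom hpn (ZMod p)) = A₀ := by
    ext i k
    simp [L]
  have hep : ZMod.castHom hpn (ZMod p) e = 1 := by
    simp only [e, map_pow, map_natCast]
    exact ZMod.pow_card_sub_one_eq_one fun h0 =>
      Nat.not_dvd_ordCompl hp (NeZero.ne n) ((ZMod.natCast_eq_zero_iff _ _).1 h0)
  have heℓ : ∀ ℓ (hℓ : ℓ ∣ n), ℓ.Prime → ℓ ≠ p → ZMod.castHom hℓ (ZMod ℓ) e = 0 := by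
    intro ℓ hℓ hℓp hne
    simp only [e, map_pow, map_natCast]
    rw [(ZMod.natCast_eq_zero_iff _ _).2 (Nat.dvd_ordCompl_of_dvd_not_dvd hℓ
      fun hdvd => hne ((Nat.prime_dvd_prime_iff_eq hp hℓp).1 hdvd).symm), zero_pow]
    have := hp.two_le
    omega
  have hMp : (ZMod.castHom hpn (ZMod p)).mapMatrix M = A₀ := by
    rw [hmap, hep, hLp, one_smul, sub_self, zero_smul, add_zero]
  have hM : IsUnit M := by
    rw [Matrix.isUnit_iff_isUnit_det]
    refine ZMod.isUnit_of_forall_prime_dvd fun ℓ hℓ hℓp => ?_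
    have := Fact.mk hℓp
    rw [RingHom.map_det]
    by_cases hℓp' : ℓ = p
    · subst hℓp'
      rw [hMp]
      exact (GeneralLinearGroup.det A₀).ne_zero
    · rw [hmap, heℓ ℓ hℓ hℓp hℓp', zero_smul, zero_add, sub_zero, one_smul, det_one]
      exact one_ne_zero
  exact ⟨hM.unit, Units.ext hMp⟩

theorem stmt9_general (m : ℕ) (n : ℕ) (p : ℕ) (hp : p.Prime) (hpn : p ∣ n) (h : ¬ Dm m p ∣ Km m n) :
    ∃ A : GL (Fin m) (ZMod n), A ^ Km m n ≠ 1 := by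
  have hK : Km m n ≠ 0 := fun hK => h (hK ▸ dvd_zero _)
  have : NeZero n := ⟨fun hn => hK (by simp [Km, hn])⟩
  obtain ⟨q, a, hq, hqD, hqK⟩ : ∃ q a, q.Prime ∧ q ^ a ∣ Dm m p ∧ ¬ q ^ a ∣ Km m n := by
    rw [Nat.dvd_iff_prime_pow_dvd_dvd] at h
    push Not at h
    exact h
  have ha : a ≠ 0 := by
    rintro rfl
    exact hqK (one_dvd _)
  obtain ⟨j, hj, hqj⟩ := exists_pow_dvd_pow_sub_one_of_dvd_Dm hp.pos hq ha hqD
  obtain ⟨A₀, hA₀⟩ := exists_GL_orderOf_eq_of_dvd_pow_sub_one hp hj hqj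
  obtain ⟨A, rfl⟩ := GeneralLinearGroup.map_castHom_surjective hp hpn A₀
  refine ⟨A, fun hA => hqK ?_⟩
  rw [← hA₀]
  exact orderOf_dvd_of_pow_eq_one (by rw [← map_pow, hA, map_one])

theorem stmt9 (m : ℕ) (hm : 2 ≤ m) (n : ℕ) (hn : 2 ≤ n) (hnp : ¬ n.Prime)
    (p : ℕ) (hp : p.Prime) (hpn : p ∣ n) (h : ¬ Dm m p ∣ Km m n) :
    ∃ A : GL (Fin m) (ZMod n), A ^ Km m n ≠ 1 :=
  stmt9_general m n p hp hpn h
end
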